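/- arXiv:2412.02226 — 2 statements merged into one kernel-verified Lean document; each statement's English description precedes it below -/
import Mathlib

section
/- Let λ ≠ 0 and μ ≠ 0 be real constants. Let H : ℝ³ → ℝ be a smooth nonvanishing function of (x,y,s) satisfying the heat-type equation ∂_s H = λ ∂_x² H - μ ∂_y² H together with ∂_x ∂_y H = 0 (as is the case for the ansatz H = φ(y) - ρ(x) used in the construction, and more generally for H = A(x,s) + B(y,s)). Define u = -H_x/H, v = H_y/H, V = H_x/H = -u, and U = -H_y/H = -v. Then these functions satisfy the combined coupled system: ∂_s u = λ ∂_x² u + μ ∂_y² u + λ ∂_x(u² + 2uV) + μ ∂_x(U²) + μ ∂_y(2uv); ∂_s v = -λ ∂_x² v - μ ∂_y² v + λ ∂_y(V²) + λ ∂_x(2uv) + μ ∂_y(v² + 2vU); ∂_y V = ∂_x v; ∂_x U = ∂_y u. -/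
noncomputable section

/-- `∂/∂x` for a function of `(x, y, s)`. -/
def dx3 (f : ℝ → ℝ → ℝ → ℝ) : ℝ → ℝ → ℝ → ℝ := fun x y s => deriv (fun r => f r y s) x

/-- `∂/∂y` for a function of `(x, y, s)`. -/
def dy3 (f : ℝ → ℝ → ℝ → ℝ) : ℝ → ℝ → ℝ → ℝ := fun x y s => deriv (fun r => f x r s) y

/-- `∂/∂s` for a function of `(x, y, s)`. -/
def ds3 (f : ℝ → ℝ → ℝ → ℝ) : ℝ → ℝ → ℝ → ℝ := fun x y s => deriv (fun r => f x y r) s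

namespace Stmt1Aux

abbrev E3 := ℝ × ℝ × ℝ

def pd (w : E3) (f : E3 → ℝ) : E3 → ℝ := fun p => fderiv ℝ f p w

lemma pd_contDiff (w : E3) {f : E3 → ℝ} (hf : ContDiff ℝ (⊤ : ℕ∞) f) :
    ContDiff ℝ (⊤ : ℕ∞) (pd w f) :=
  (hf.fderiv_right (by simp)).clm_apply contDiff_const

lemma pd_comm {f : E3 → ℝ} (hf : ContDiff ℝ (⊤ : ℕ∞) f) (w w' : E3) :
    pd w (pd w' f) = pd w' (pd w f) := by
  funext p
  have hdf : DifferentiableAt ℝ (fderiv ℝ f) p :=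
    ((hf.fderiv_right (m := (⊤ : ℕ∞)) (by simp)).differentiable (by simp)).differentiableAt
  have h1 : ∀ (v v' : E3), pd v (pd v' f) p = fderiv ℝ (fderiv ℝ f) p v v' := by
    intro v v'
    show (fderiv ℝ (fun q => (fderiv ℝ f q) v') p) v = _
    rw [fderiv_clm_apply hdf (differentiableAt_const _)]
    simp
  rw [h1 w w', h1 w' w]
  exact (hf.contDiffAt.isSymmSndFDerivAt (by simp; exact WithTop.coe_le_coe.mpr le_top)).eq w w'

lemma pd_zero_fun (w : E3) : pd w (fun _ => (0:ℝ)) = fun _ => 0 := by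
  funext p; simp [pd]

lemma hasDerivAt_slice1 {f : E3 → ℝ} (hf : Differentiable ℝ f) (x y s : ℝ) :
    HasDerivAt (fun r => f (r, y, s)) (pd (1,0,0) f (x, y, s)) x := by
  have hL : HasDerivAt (fun r : ℝ => ((r, y, s) : E3)) ((1,0,0) : E3) x :=
    (hasDerivAt_id x).prodMk ((hasDerivAt_const x y).prodMk (hasDerivAt_const x s))
  exact (hf (x,y,s)).hasFDerivAt.comp_hasDerivAt x hL

lemma hasDerivAt_slice2 {f : E3 → ℝ} (hf : Differentiable ℝ f) (x y s : ℝ) :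
    HasDerivAt (fun r => f (x, r, s)) (pd (0,1,0) f (x, y, s)) y := by
  have hL : HasDerivAt (fun r : ℝ => ((x, r, s) : E3)) ((0,1,0) : E3) y :=
    (hasDerivAt_const y x).prodMk ((hasDerivAt_id y).prodMk (hasDerivAt_const y s))
  exact (hf (x,y,s)).hasFDerivAt.comp_hasDerivAt y hL

lemma hasDerivAt_slice3 {f : E3 → ℝ} (hf : Differentiable ℝ f) (x y s : ℝ) :
    HasDerivAt (fun r => f (x, y, r)) (pd (0,0,1) f (x, y, s)) s := by
  have hL : HasDerivAt (fun r : ℝ => ((x, y, r) : E3)) ((0,0,1) : E3) s :=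
    (hasDerivAt_const s x).prodMk ((hasDerivAt_const s y).prodMk (hasDerivAt_id s))
  exact (hf (x,y,s)).hasFDerivAt.comp_hasDerivAt s hL

set_option maxHeartbeats 2000000 in
/-- The main computation, phrased for an abstract smooth nonvanishing `F : E3 → ℝ`. -/
lemma main (lam mu : ℝ) (F : E3 → ℝ) (hFs : ContDiff ℝ (⊤ : ℕ∞) F)
    (hne : ∀ p : E3, F p ≠ 0)
    (hheat : ∀ p : E3, pd (0,0,1) F p
        = lam * pd (1,0,0) (pd (1,0,0) F) p - mu * pd (0,1,0) (pd (0,1,0) F) p)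
    (hmixed : ∀ p : E3, pd (1,0,0) (pd (0,1,0) F) p = 0) :
    (∀ x y s, ds3 (fun x y s => -(pd (1,0,0) F (x,y,s)) / F (x,y,s)) x y s
        = lam * dx3 (dx3 (fun x y s => -(pd (1,0,0) F (x,y,s)) / F (x,y,s))) x y s
          + mu * dy3 (dy3 (fun x y s => -(pd (1,0,0) F (x,y,s)) / F (x,y,s))) x y s
          + lam * dx3 (fun x y s => (-(pd (1,0,0) F (x,y,s)) / F (x,y,s)) ^ 2
              + 2 * (-(pd (1,0,0) F (x,y,s)) / F (x,y,s)) * (pd (1,0,0) F (x,y,s) / F (x,y,s))) x y s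
          + mu * dx3 (fun x y s => (-(pd (0,1,0) F (x,y,s)) / F (x,y,s)) ^ 2) x y s
          + mu * dy3 (fun x y s => 2 * (-(pd (1,0,0) F (x,y,s)) / F (x,y,s))
              * (pd (0,1,0) F (x,y,s) / F (x,y,s))) x y s) ∧
    (∀ x y s, ds3 (fun x y s => pd (0,1,0) F (x,y,s) / F (x,y,s)) x y s
        = -(lam * dx3 (dx3 (fun x y s => pd (0,1,0) F (x,y,s) / F (x,y,s))) x y s)
          - mu * dy3 (dy3 (fun x y s => pd (0,1,0) F (x,y,s) / F (x,y,s))) x y s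
          + lam * dy3 (fun x y s => (pd (1,0,0) F (x,y,s) / F (x,y,s)) ^ 2) x y s
          + lam * dx3 (fun x y s => 2 * (-(pd (1,0,0) F (x,y,s)) / F (x,y,s))
              * (pd (0,1,0) F (x,y,s) / F (x,y,s))) x y s
          + mu * dy3 (fun x y s => (pd (0,1,0) F (x,y,s) / F (x,y,s)) ^ 2
              + 2 * (pd (0,1,0) F (x,y,s) / F (x,y,s)) * (-(pd (0,1,0) F (x,y,s)) / F (x,y,s))) x y s) ∧
    (∀ x y s, dy3 (fun x y s => pd (1,0,0) F (x,y,s) / F (x,y,s)) x y s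
        = dx3 (fun x y s => pd (0,1,0) F (x,y,s) / F (x,y,s)) x y s) ∧
    (∀ x y s, dx3 (fun x y s => -(pd (0,1,0) F (x,y,s)) / F (x,y,s)) x y s
        = dy3 (fun x y s => -(pd (1,0,0) F (x,y,s)) / F (x,y,s)) x y s) := by
  have hFd : Differentiable ℝ F := hFs.differentiable (by simp)
  have hBs : ContDiff ℝ (⊤ : ℕ∞) (pd (1,0,0) F) := pd_contDiff _ hFs
  have hCs : ContDiff ℝ (⊤ : ℕ∞) (pd (0,1,0) F) := pd_contDiff _ hFs
  have hBd : Differentiable ℝ (pd (1,0,0) F) := hBs.differentiable (by simp)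
  have hCd : Differentiable ℝ (pd (0,1,0) F) := hCs.differentiable (by simp)
  have hB1d : Differentiable ℝ (pd (1,0,0) (pd (1,0,0) F)) :=
    (pd_contDiff _ hBs).differentiable (by simp)
  have hC2d : Differentiable ℝ (pd (0,1,0) (pd (0,1,0) F)) :=
    (pd_contDiff _ hCs).differentiable (by simp)
  -- zero facts
  have hC1f : pd (1,0,0) (pd (0,1,0) F) = fun _ => 0 := funext fun p => hmixed p
  have hB2f : pd (0,1,0) (pd (1,0,0) F) = fun _ => 0 :=
    (pd_comm hFs (0,1,0) (1,0,0)).trans hC1f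
  have hB12f : pd (0,1,0) (pd (1,0,0) (pd (1,0,0) F)) = fun _ => 0 := by
    rw [pd_comm hBs (0,1,0) (1,0,0), hB2f, pd_zero_fun]
  have hC21f : pd (1,0,0) (pd (0,1,0) (pd (0,1,0) F)) = fun _ => 0 := by
    rw [pd_comm hCs (1,0,0) (0,1,0), hC1f, pd_zero_fun]
  have hDf : pd (0,0,1) F
      = fun p => lam * pd (1,0,0) (pd (1,0,0) F) p - mu * pd (0,1,0) (pd (0,1,0) F) p :=
    funext fun p => hheat p
  -- third-order facts
  have hB3 : ∀ x y s : ℝ, pd (0,0,1) (pd (1,0,0) F) (x,y,s)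
      = lam * pd (1,0,0) (pd (1,0,0) (pd (1,0,0) F)) (x,y,s) := by
    intro x y s
    rw [pd_comm hFs (0,0,1) (1,0,0), hDf]
    have hgd : Differentiable ℝ (fun p : E3 =>
        lam * pd (1,0,0) (pd (1,0,0) F) p - mu * pd (0,1,0) (pd (0,1,0) F) p) :=
      (hB1d.const_mul lam).sub (hC2d.const_mul mu)
    have h2 := hasDerivAt_slice1 hgd x y s
    have h3 := ((hasDerivAt_slice1 hB1d x y s).const_mul lam).sub
      ((hasDerivAt_slice1 hC2d x y s).const_mul mu)
    rw [h2.unique h3, hC21f]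
    simp
  have hC3 : ∀ x y s : ℝ, pd (0,0,1) (pd (0,1,0) F) (x,y,s)
      = -(mu * pd (0,1,0) (pd (0,1,0) (pd (0,1,0) F)) (x,y,s)) := by
    intro x y s
    rw [pd_comm hFs (0,0,1) (0,1,0), hDf]
    have hgd : Differentiable ℝ (fun p : E3 =>
        lam * pd (1,0,0) (pd (1,0,0) F) p - mu * pd (0,1,0) (pd (0,1,0) F) p) :=
      (hB1d.const_mul lam).sub (hC2d.const_mul mu)
    have h2 := hasDerivAt_slice2 hgd x y s
    have h3 := ((hasDerivAt_slice2 hB1d x y s).const_mul lam).sub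
      ((hasDerivAt_slice2 hC2d x y s).const_mul mu)
    rw [h2.unique h3, hB12f]
    simp
  -- first derivatives of u = -B/A
  have husp : ∀ x y s : ℝ,
      ds3 (fun x y s => -(pd (1,0,0) F (x,y,s)) / F (x,y,s)) x y s
      = (pd (1,0,0) F (x,y,s) * (lam * pd (1,0,0) (pd (1,0,0) F) (x,y,s)
            - mu * pd (0,1,0) (pd (0,1,0) F) (x,y,s))
          - lam * pd (1,0,0) (pd (1,0,0) (pd (1,0,0) F)) (x,y,s) * F (x,y,s)) / F (x,y,s) ^ 2 := by
    intro x y s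
    exact (((hasDerivAt_slice3 hBd x y s).neg.div (hasDerivAt_slice3 hFd x y s)
      (hne _)).deriv).trans (by
        simp only [Pi.neg_apply, Pi.pow_apply, Pi.mul_apply, Pi.sub_apply, Pi.add_apply, Pi.div_apply]
        simp only [hB3, hheat]
        have hA := hne ((x,y,s) : E3)
        field_simp
        ring)
  have huxf : dx3 (fun x y s => -(pd (1,0,0) F (x,y,s)) / F (x,y,s))
      = fun x y s => (pd (1,0,0) F (x,y,s) ^ 2
          - pd (1,0,0) (pd (1,0,0) F) (x,y,s) * F (x,y,s)) / F (x,y,s) ^ 2 := by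
    funext x y s
    exact (((hasDerivAt_slice1 hBd x y s).neg.div (hasDerivAt_slice1 hFd x y s)
      (hne _)).deriv).trans (by
        simp only [Pi.neg_apply, Pi.pow_apply, Pi.mul_apply, Pi.sub_apply, Pi.add_apply, Pi.div_apply]
        have hA := hne ((x,y,s) : E3)
        field_simp
        ring)
  have huxx : ∀ x y s : ℝ,
      dx3 (fun x y s => (pd (1,0,0) F (x,y,s) ^ 2
          - pd (1,0,0) (pd (1,0,0) F) (x,y,s) * F (x,y,s)) / F (x,y,s) ^ 2) x y s
      = (3 * F (x,y,s) ^ 2 * pd (1,0,0) F (x,y,s) * pd (1,0,0) (pd (1,0,0) F) (x,y,s)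
          - F (x,y,s) ^ 3 * pd (1,0,0) (pd (1,0,0) (pd (1,0,0) F)) (x,y,s)
          - 2 * F (x,y,s) * pd (1,0,0) F (x,y,s) ^ 3) / F (x,y,s) ^ 4 := by
    intro x y s
    exact (((((hasDerivAt_slice1 hBd x y s).pow 2).sub
      ((hasDerivAt_slice1 hB1d x y s).mul (hasDerivAt_slice1 hFd x y s))).div
      ((hasDerivAt_slice1 hFd x y s).pow 2) (pow_ne_zero 2 (hne _))).deriv).trans (by
        simp only [Pi.neg_apply, Pi.pow_apply, Pi.mul_apply, Pi.sub_apply, Pi.add_apply, Pi.div_apply]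
        have hA := hne ((x,y,s) : E3)
        field_simp
        ring)
  have huyf : dy3 (fun x y s => -(pd (1,0,0) F (x,y,s)) / F (x,y,s))
      = fun x y s => pd (1,0,0) F (x,y,s) * pd (0,1,0) F (x,y,s) / F (x,y,s) ^ 2 := by
    funext x y s
    exact (((hasDerivAt_slice2 hBd x y s).neg.div (hasDerivAt_slice2 hFd x y s)
      (hne _)).deriv).trans (by
        simp only [Pi.neg_apply, Pi.pow_apply, Pi.mul_apply, Pi.sub_apply, Pi.add_apply, Pi.div_apply]
        simp only [hB2f]
        have hA := hne ((x,y,s) : E3)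
        field_simp
        ring)
  have huyy : ∀ x y s : ℝ,
      dy3 (fun x y s => pd (1,0,0) F (x,y,s) * pd (0,1,0) F (x,y,s) / F (x,y,s) ^ 2) x y s
      = (F (x,y,s) ^ 2 * pd (1,0,0) F (x,y,s) * pd (0,1,0) (pd (0,1,0) F) (x,y,s)
          - 2 * F (x,y,s) * pd (1,0,0) F (x,y,s) * pd (0,1,0) F (x,y,s) ^ 2) / F (x,y,s) ^ 4 := by
    intro x y s
    exact ((((hasDerivAt_slice2 hBd x y s).mul (hasDerivAt_slice2 hCd x y s)).div
      ((hasDerivAt_slice2 hFd x y s).pow 2) (pow_ne_zero 2 (hne _))).deriv).trans (by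
        simp only [Pi.neg_apply, Pi.pow_apply, Pi.mul_apply, Pi.sub_apply, Pi.add_apply, Pi.div_apply]
        simp only [hB2f]
        have hA := hne ((x,y,s) : E3)
        field_simp
        ring)
  -- first derivatives of v = C/A
  have hvsp : ∀ x y s : ℝ,
      ds3 (fun x y s => pd (0,1,0) F (x,y,s) / F (x,y,s)) x y s
      = (pd (0,1,0) F (x,y,s) * (mu * pd (0,1,0) (pd (0,1,0) F) (x,y,s)
            - lam * pd (1,0,0) (pd (1,0,0) F) (x,y,s))
          - mu * pd (0,1,0) (pd (0,1,0) (pd (0,1,0) F)) (x,y,s) * F (x,y,s)) / F (x,y,s) ^ 2 := by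
    intro x y s
    exact (((hasDerivAt_slice3 hCd x y s).div (hasDerivAt_slice3 hFd x y s)
      (hne _)).deriv).trans (by
        simp only [hC3, hheat]
        have hA := hne ((x,y,s) : E3)
        field_simp
        ring)
  have hvxf : dx3 (fun x y s => pd (0,1,0) F (x,y,s) / F (x,y,s))
      = fun x y s => -(pd (1,0,0) F (x,y,s) * pd (0,1,0) F (x,y,s)) / F (x,y,s) ^ 2 := by
    funext x y s
    exact (((hasDerivAt_slice1 hCd x y s).div (hasDerivAt_slice1 hFd x y s)
      (hne _)).deriv).trans (by
        simp only [hC1f]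
        have hA := hne ((x,y,s) : E3)
        field_simp
        ring)
  have hvxx : ∀ x y s : ℝ,
      dx3 (fun x y s => -(pd (1,0,0) F (x,y,s) * pd (0,1,0) F (x,y,s)) / F (x,y,s) ^ 2) x y s
      = (2 * F (x,y,s) * pd (1,0,0) F (x,y,s) ^ 2 * pd (0,1,0) F (x,y,s)
          - F (x,y,s) ^ 2 * pd (1,0,0) (pd (1,0,0) F) (x,y,s) * pd (0,1,0) F (x,y,s))
        / F (x,y,s) ^ 4 := by
    intro x y s
    exact (((((hasDerivAt_slice1 hBd x y s).mul (hasDerivAt_slice1 hCd x y s)).neg).div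
      ((hasDerivAt_slice1 hFd x y s).pow 2) (pow_ne_zero 2 (hne _))).deriv).trans (by
        simp only [Pi.neg_apply, Pi.pow_apply, Pi.mul_apply, Pi.sub_apply, Pi.add_apply, Pi.div_apply]
        simp only [hC1f]
        have hA := hne ((x,y,s) : E3)
        field_simp
        ring)
  have hvyf : dy3 (fun x y s => pd (0,1,0) F (x,y,s) / F (x,y,s))
      = fun x y s => (pd (0,1,0) (pd (0,1,0) F) (x,y,s) * F (x,y,s)
          - pd (0,1,0) F (x,y,s) ^ 2) / F (x,y,s) ^ 2 := by
    funext x y s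
    exact (((hasDerivAt_slice2 hCd x y s).div (hasDerivAt_slice2 hFd x y s)
      (hne _)).deriv).trans (by
        have hA := hne ((x,y,s) : E3)
        field_simp)
  have hvyy : ∀ x y s : ℝ,
      dy3 (fun x y s => (pd (0,1,0) (pd (0,1,0) F) (x,y,s) * F (x,y,s)
          - pd (0,1,0) F (x,y,s) ^ 2) / F (x,y,s) ^ 2) x y s
      = (F (x,y,s) ^ 3 * pd (0,1,0) (pd (0,1,0) (pd (0,1,0) F)) (x,y,s)
          - 3 * F (x,y,s) ^ 2 * pd (0,1,0) F (x,y,s) * pd (0,1,0) (pd (0,1,0) F) (x,y,s)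
          + 2 * F (x,y,s) * pd (0,1,0) F (x,y,s) ^ 3) / F (x,y,s) ^ 4 := by
    intro x y s
    exact (((((hasDerivAt_slice2 hC2d x y s).mul (hasDerivAt_slice2 hFd x y s)).sub
      ((hasDerivAt_slice2 hCd x y s).pow 2)).div
      ((hasDerivAt_slice2 hFd x y s).pow 2) (pow_ne_zero 2 (hne _))).deriv).trans (by
        simp only [Pi.neg_apply, Pi.pow_apply, Pi.mul_apply, Pi.sub_apply, Pi.add_apply, Pi.div_apply]
        have hA := hne ((x,y,s) : E3)
        field_simp
        ring)
  -- nonlinear terms, eq 1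
  have hT4 : ∀ x y s : ℝ,
      dx3 (fun x y s => (-(pd (1,0,0) F (x,y,s)) / F (x,y,s)) ^ 2
          + 2 * (-(pd (1,0,0) F (x,y,s)) / F (x,y,s))
            * (pd (1,0,0) F (x,y,s) / F (x,y,s))) x y s
      = (2 * F (x,y,s) * pd (1,0,0) F (x,y,s) ^ 3
          - 2 * F (x,y,s) ^ 2 * pd (1,0,0) F (x,y,s) * pd (1,0,0) (pd (1,0,0) F) (x,y,s))
        / F (x,y,s) ^ 4 := by
    intro x y s
    have hP := (hasDerivAt_slice1 hBd x y s).neg.div (hasDerivAt_slice1 hFd x y s) (hne _)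
    have hQ := (hasDerivAt_slice1 hBd x y s).div (hasDerivAt_slice1 hFd x y s) (hne _)
    exact (((hP.pow 2).add ((hP.const_mul 2).mul hQ)).deriv).trans (by
        simp only [Pi.neg_apply, Pi.pow_apply, Pi.mul_apply, Pi.sub_apply, Pi.add_apply, Pi.div_apply]
        have hA := hne ((x,y,s) : E3)
        field_simp
        ring_nf
        field_simp
        ring)
  have hT5 : ∀ x y s : ℝ,
      dx3 (fun x y s => (-(pd (0,1,0) F (x,y,s)) / F (x,y,s)) ^ 2) x y s
      = (-(2 * F (x,y,s) * pd (1,0,0) F (x,y,s) * pd (0,1,0) F (x,y,s) ^ 2))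
        / F (x,y,s) ^ 4 := by
    intro x y s
    exact ((((hasDerivAt_slice1 hCd x y s).neg.div (hasDerivAt_slice1 hFd x y s)
      (hne _)).pow 2).deriv).trans (by
        simp only [Pi.neg_apply, Pi.pow_apply, Pi.mul_apply, Pi.sub_apply, Pi.add_apply, Pi.div_apply]
        simp only [hC1f]
        have hA := hne ((x,y,s) : E3)
        field_simp
        ring_nf
        field_simp)
  have hT6 : ∀ x y s : ℝ,
      dy3 (fun x y s => 2 * (-(pd (1,0,0) F (x,y,s)) / F (x,y,s))
          * (pd (0,1,0) F (x,y,s) / F (x,y,s))) x y s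
      = (4 * F (x,y,s) * pd (1,0,0) F (x,y,s) * pd (0,1,0) F (x,y,s) ^ 2
          - 2 * F (x,y,s) ^ 2 * pd (1,0,0) F (x,y,s) * pd (0,1,0) (pd (0,1,0) F) (x,y,s))
        / F (x,y,s) ^ 4 := by
    intro x y s
    have hP := (hasDerivAt_slice2 hBd x y s).neg.div (hasDerivAt_slice2 hFd x y s) (hne _)
    have hQ := (hasDerivAt_slice2 hCd x y s).div (hasDerivAt_slice2 hFd x y s) (hne _)
    exact (((hP.const_mul 2).mul hQ).deriv).trans (by
        simp only [Pi.neg_apply, Pi.pow_apply, Pi.mul_apply, Pi.sub_apply, Pi.add_apply, Pi.div_apply]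
        simp only [hB2f]
        have hA := hne ((x,y,s) : E3)
        field_simp
        ring)
  -- nonlinear terms, eq 2
  have hT7 : ∀ x y s : ℝ,
      dy3 (fun x y s => (pd (1,0,0) F (x,y,s) / F (x,y,s)) ^ 2) x y s
      = (-(2 * F (x,y,s) * pd (1,0,0) F (x,y,s) ^ 2 * pd (0,1,0) F (x,y,s)))
        / F (x,y,s) ^ 4 := by
    intro x y s
    exact ((((hasDerivAt_slice2 hBd x y s).div (hasDerivAt_slice2 hFd x y s)
      (hne _)).pow 2).deriv).trans (by
        simp only [Pi.neg_apply, Pi.pow_apply, Pi.mul_apply, Pi.sub_apply, Pi.add_apply, Pi.div_apply]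
        simp only [hB2f]
        have hA := hne ((x,y,s) : E3)
        field_simp
        ring_nf
        field_simp)
  have hT8 : ∀ x y s : ℝ,
      dx3 (fun x y s => 2 * (-(pd (1,0,0) F (x,y,s)) / F (x,y,s))
          * (pd (0,1,0) F (x,y,s) / F (x,y,s))) x y s
      = (4 * F (x,y,s) * pd (1,0,0) F (x,y,s) ^ 2 * pd (0,1,0) F (x,y,s)
          - 2 * F (x,y,s) ^ 2 * pd (1,0,0) (pd (1,0,0) F) (x,y,s) * pd (0,1,0) F (x,y,s))
        / F (x,y,s) ^ 4 := by
    intro x y s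
    have hP := (hasDerivAt_slice1 hBd x y s).neg.div (hasDerivAt_slice1 hFd x y s) (hne _)
    have hQ := (hasDerivAt_slice1 hCd x y s).div (hasDerivAt_slice1 hFd x y s) (hne _)
    exact (((hP.const_mul 2).mul hQ).deriv).trans (by
        simp only [Pi.neg_apply, Pi.pow_apply, Pi.mul_apply, Pi.sub_apply, Pi.add_apply, Pi.div_apply]
        simp only [hC1f]
        have hA := hne ((x,y,s) : E3)
        field_simp
        ring)
  have hT9 : ∀ x y s : ℝ,
      dy3 (fun x y s => (pd (0,1,0) F (x,y,s) / F (x,y,s)) ^ 2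
          + 2 * (pd (0,1,0) F (x,y,s) / F (x,y,s))
            * (-(pd (0,1,0) F (x,y,s)) / F (x,y,s))) x y s
      = (2 * F (x,y,s) * pd (0,1,0) F (x,y,s) ^ 3
          - 2 * F (x,y,s) ^ 2 * pd (0,1,0) F (x,y,s) * pd (0,1,0) (pd (0,1,0) F) (x,y,s))
        / F (x,y,s) ^ 4 := by
    intro x y s
    have hQ := (hasDerivAt_slice2 hCd x y s).div (hasDerivAt_slice2 hFd x y s) (hne _)
    have hP := (hasDerivAt_slice2 hCd x y s).neg.div (hasDerivAt_slice2 hFd x y s) (hne _)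
    exact (((hQ.pow 2).add ((hQ.const_mul 2).mul hP)).deriv).trans (by
        simp only [Pi.neg_apply, Pi.pow_apply, Pi.mul_apply, Pi.sub_apply, Pi.add_apply, Pi.div_apply]
        have hA := hne ((x,y,s) : E3)
        field_simp
        ring_nf
        field_simp
        ring)
  -- V and U first derivatives
  have hVy : ∀ x y s : ℝ,
      dy3 (fun x y s => pd (1,0,0) F (x,y,s) / F (x,y,s)) x y s
      = -(pd (1,0,0) F (x,y,s) * pd (0,1,0) F (x,y,s)) / F (x,y,s) ^ 2 := by
    intro x y s
    exact (((hasDerivAt_slice2 hBd x y s).div (hasDerivAt_slice2 hFd x y s)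
      (hne _)).deriv).trans (by
        simp only [hB2f]
        have hA := hne ((x,y,s) : E3)
        field_simp
        ring)
  have hUx : ∀ x y s : ℝ,
      dx3 (fun x y s => -(pd (0,1,0) F (x,y,s)) / F (x,y,s)) x y s
      = pd (1,0,0) F (x,y,s) * pd (0,1,0) F (x,y,s) / F (x,y,s) ^ 2 := by
    intro x y s
    exact (((hasDerivAt_slice1 hCd x y s).neg.div (hasDerivAt_slice1 hFd x y s)
      (hne _)).deriv).trans (by
        simp only [Pi.neg_apply, Pi.pow_apply, Pi.mul_apply, Pi.sub_apply, Pi.add_apply, Pi.div_apply]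
        simp only [hC1f]
        have hA := hne ((x,y,s) : E3)
        field_simp
        ring)
  refine ⟨?_, ?_, ?_, ?_⟩
  · intro x y s
    rw [husp x y s, huxf, huxx x y s, huyf, huyy x y s, hT4 x y s, hT5 x y s, hT6 x y s]
    have hA := hne ((x,y,s) : E3)
    set A := F (x,y,s)
    set B := pd (1,0,0) F (x,y,s)
    set C := pd (0,1,0) F (x,y,s)
    set B1 := pd (1,0,0) (pd (1,0,0) F) (x,y,s)
    set C2 := pd (0,1,0) (pd (0,1,0) F) (x,y,s)
    set B11 := pd (1,0,0) (pd (1,0,0) (pd (1,0,0) F)) (x,y,s)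
    field_simp
    ring
  · intro x y s
    rw [hvsp x y s, hvxf, hvxx x y s, hvyf, hvyy x y s, hT7 x y s, hT8 x y s, hT9 x y s]
    have hA := hne ((x,y,s) : E3)
    set A := F (x,y,s)
    set B := pd (1,0,0) F (x,y,s)
    set C := pd (0,1,0) F (x,y,s)
    set B1 := pd (1,0,0) (pd (1,0,0) F) (x,y,s)
    set C2 := pd (0,1,0) (pd (0,1,0) F) (x,y,s)
    set C22 := pd (0,1,0) (pd (0,1,0) (pd (0,1,0) F)) (x,y,s)
    field_simp
    ring
  · intro x y s
    rw [hVy x y s, hvxf]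
  · intro x y s
    rw [hUx x y s, huyf]

end Stmt1Aux

open Stmt1Aux

/-- Let `λ ≠ 0`, `μ ≠ 0`. If `H(x,y,s)` is a smooth nonvanishing
solution of `H_s = λ H_xx - μ H_yy` with `H_xy = 0`, then `u = -H_x/H`, `v = H_y/H`,
`V = H_x/H = -u`, `U = -H_y/H = -v` satisfy the combined coupled system
`u_s = λ u_xx + μ u_yy + λ (u² + 2uV)_x + μ (U²)_x + μ (2uv)_y`,
`v_s = -λ v_xx - μ v_yy + λ (V²)_y + λ (2uv)_x + μ (v² + 2vU)_y`,
`V_y = v_x`, `U_x = u_y`. -/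
theorem stmt1
    (lam mu : ℝ) (hlam : lam ≠ 0) (hmu : mu ≠ 0)
    (H u v U V : ℝ → ℝ → ℝ → ℝ)
    (hH : ContDiff ℝ (⊤ : ℕ∞) ↿H)
    (hne : ∀ x y s, H x y s ≠ 0)
    (hheat : ∀ x y s, ds3 H x y s
        = lam * dx3 (dx3 H) x y s - mu * dy3 (dy3 H) x y s)
    (hmixed : ∀ x y s, dx3 (dy3 H) x y s = 0)
    (hu : ∀ x y s, u x y s = -(dx3 H x y s) / H x y s)
    (hv : ∀ x y s, v x y s = dy3 H x y s / H x y s)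
    (hV : ∀ x y s, V x y s = dx3 H x y s / H x y s)
    (hU : ∀ x y s, U x y s = -(dy3 H x y s) / H x y s) :
    (∀ x y s, ds3 u x y s
        = lam * dx3 (dx3 u) x y s + mu * dy3 (dy3 u) x y s
          + lam * dx3 (fun x y s => (u x y s) ^ 2 + 2 * u x y s * V x y s) x y s
          + mu * dx3 (fun x y s => (U x y s) ^ 2) x y s
          + mu * dy3 (fun x y s => 2 * u x y s * v x y s) x y s) ∧
    (∀ x y s, ds3 v x y s
        = -(lam * dx3 (dx3 v) x y s) - mu * dy3 (dy3 v) x y s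
          + lam * dy3 (fun x y s => (V x y s) ^ 2) x y s
          + lam * dx3 (fun x y s => 2 * u x y s * v x y s) x y s
          + mu * dy3 (fun x y s => (v x y s) ^ 2 + 2 * v x y s * U x y s) x y s) ∧
    (∀ x y s, dy3 V x y s = dx3 v x y s) ∧
    (∀ x y s, dx3 U x y s = dy3 u x y s) := by
  have hFs : ContDiff ℝ (⊤ : ℕ∞) (fun p : E3 => H p.1 p.2.1 p.2.2) := hH
  have hFd : Differentiable ℝ (fun p : E3 => H p.1 p.2.1 p.2.2) := hFs.differentiable (by simp)
  have hBd : Differentiable ℝ (pd (1,0,0) (fun p : E3 => H p.1 p.2.1 p.2.2)) :=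
    (pd_contDiff _ hFs).differentiable (by simp)
  have hCd : Differentiable ℝ (pd (0,1,0) (fun p : E3 => H p.1 p.2.1 p.2.2)) :=
    (pd_contDiff _ hFs).differentiable (by simp)
  have hHx : ∀ x y s : ℝ, dx3 H x y s
      = pd (1,0,0) (fun p : E3 => H p.1 p.2.1 p.2.2) (x,y,s) :=
    fun x y s => (hasDerivAt_slice1 hFd x y s).deriv
  have hHy : ∀ x y s : ℝ, dy3 H x y s
      = pd (0,1,0) (fun p : E3 => H p.1 p.2.1 p.2.2) (x,y,s) :=
    fun x y s => (hasDerivAt_slice2 hFd x y s).deriv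
  have hHs : ∀ x y s : ℝ, ds3 H x y s
      = pd (0,0,1) (fun p : E3 => H p.1 p.2.1 p.2.2) (x,y,s) :=
    fun x y s => (hasDerivAt_slice3 hFd x y s).deriv
  have hHxf : dx3 H = fun x y s => pd (1,0,0) (fun p : E3 => H p.1 p.2.1 p.2.2) (x,y,s) :=
    funext fun x => funext fun y => funext fun s => hHx x y s
  have hHyf : dy3 H = fun x y s => pd (0,1,0) (fun p : E3 => H p.1 p.2.1 p.2.2) (x,y,s) :=
    funext fun x => funext fun y => funext fun s => hHy x y s
  have hne' : ∀ p : E3, (fun p : E3 => H p.1 p.2.1 p.2.2) p ≠ 0 :=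
    fun p => hne p.1 p.2.1 p.2.2
  have hmixed' : ∀ p : E3,
      pd (1,0,0) (pd (0,1,0) (fun p : E3 => H p.1 p.2.1 p.2.2)) p = 0 := by
    rintro ⟨x, y, s⟩
    rw [← (hasDerivAt_slice1 hCd x y s).deriv]
    have h := hmixed x y s
    rw [hHyf] at h
    exact h
  have hheat' : ∀ p : E3,
      pd (0,0,1) (fun p : E3 => H p.1 p.2.1 p.2.2) p
        = lam * pd (1,0,0) (pd (1,0,0) (fun p : E3 => H p.1 p.2.1 p.2.2)) p
          - mu * pd (0,1,0) (pd (0,1,0) (fun p : E3 => H p.1 p.2.1 p.2.2)) p := by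
    rintro ⟨x, y, s⟩
    rw [← (hasDerivAt_slice3 hFd x y s).deriv, ← (hasDerivAt_slice1 hBd x y s).deriv,
      ← (hasDerivAt_slice2 hCd x y s).deriv]
    have h := hheat x y s
    rw [hHxf, hHyf] at h
    exact h
  have hu' : u = fun x y s =>
      -(pd (1,0,0) (fun p : E3 => H p.1 p.2.1 p.2.2) (x,y,s)) / H x y s := by
    funext x y s; rw [hu x y s, hHx x y s]
  have hv' : v = fun x y s =>
      pd (0,1,0) (fun p : E3 => H p.1 p.2.1 p.2.2) (x,y,s) / H x y s := by
    funext x y s; rw [hv x y s, hHy x y s]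
  have hV' : V = fun x y s =>
      pd (1,0,0) (fun p : E3 => H p.1 p.2.1 p.2.2) (x,y,s) / H x y s := by
    funext x y s; rw [hV x y s, hHx x y s]
  have hU' : U = fun x y s =>
      -(pd (0,1,0) (fun p : E3 => H p.1 p.2.1 p.2.2) (x,y,s)) / H x y s := by
    funext x y s; rw [hU x y s, hHy x y s]
  subst hu' hv' hV' hU'
  exact main lam mu (fun p : E3 => H p.1 p.2.1 p.2.2) hFs hne' hheat' hmixed'
end
end

section
/- Let u, v : ℝ² → ℝ be smooth nonvanishing functions of (x,y) satisfying the reduced system ∂_y u = -uv and ∂_x v = uv. Then I := (∂_x u)/u - u is a y-integral and J := (∂_y v)/v + v is an x-integral, i.e. ∂_y((∂_x u)/u - u) = 0 and ∂_x((∂_y v)/v + v) = 0 everywhere. -/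
noncomputable section

/-- `∂/∂x` for a function of `(x, y)`. -/
def dx2 (f : ℝ → ℝ → ℝ) : ℝ → ℝ → ℝ := fun x y => deriv (fun s => f s y) x

/-- `∂/∂y` for a function of `(x, y)`. -/
def dy2 (f : ℝ → ℝ → ℝ) : ℝ → ℝ → ℝ := fun x y => deriv (fun s => f x s) y

lemma hasDerivAt_x (f : ℝ → ℝ → ℝ) (hf : ContDiff ℝ (⊤ : ℕ∞) ↿f) (x y : ℝ) :
    HasDerivAt (fun s => f s y) (fderiv ℝ ↿f (x, y) (1, 0)) x := by
  have h1 : HasFDerivAt ↿f (fderiv ℝ ↿f (x, y)) (x, y) :=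
    (hf.differentiable (by simp) (x, y)).hasFDerivAt
  have h2 : HasDerivAt (fun s : ℝ => (s, y)) ((1 : ℝ), (0 : ℝ)) x := by
    simpa using HasDerivAt.prodMk (hasDerivAt_id x) (hasDerivAt_const x y)
  exact h1.comp_hasDerivAt x h2

lemma hasDerivAt_y (f : ℝ → ℝ → ℝ) (hf : ContDiff ℝ (⊤ : ℕ∞) ↿f) (x y : ℝ) :
    HasDerivAt (fun t => f x t) (fderiv ℝ ↿f (x, y) (0, 1)) y := by
  have h1 : HasFDerivAt ↿f (fderiv ℝ ↿f (x, y)) (x, y) :=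
    (hf.differentiable (by simp) (x, y)).hasFDerivAt
  have h2 : HasDerivAt (fun t : ℝ => (x, t)) ((0 : ℝ), (1 : ℝ)) y := by
    simpa using HasDerivAt.prodMk (hasDerivAt_const y x) (hasDerivAt_id y)
  exact h1.comp_hasDerivAt y h2

lemma dx2_eq (f : ℝ → ℝ → ℝ) (hf : ContDiff ℝ (⊤ : ℕ∞) ↿f) (x y : ℝ) :
    dx2 f x y = fderiv ℝ ↿f (x, y) (1, 0) := (hasDerivAt_x f hf x y).deriv

lemma dy2_eq (f : ℝ → ℝ → ℝ) (hf : ContDiff ℝ (⊤ : ℕ∞) ↿f) (x y : ℝ) :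
    dy2 f x y = fderiv ℝ ↿f (x, y) (0, 1) := (hasDerivAt_y f hf x y).deriv

lemma contDiff_pd (f : ℝ → ℝ → ℝ) (hf : ContDiff ℝ (⊤ : ℕ∞) ↿f) (w : ℝ × ℝ) :
    ContDiff ℝ (⊤ : ℕ∞) (fun p : ℝ × ℝ => fderiv ℝ ↿f p w) :=
  (hf.fderiv_right (m := (⊤ : ℕ∞)) (by simp)).clm_apply contDiff_const

lemma contDiff_dx2 (f : ℝ → ℝ → ℝ) (hf : ContDiff ℝ (⊤ : ℕ∞) ↿f) :
    ContDiff ℝ (⊤ : ℕ∞) ↿(dx2 f) := by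
  have : ↿(dx2 f) = fun p : ℝ × ℝ => fderiv ℝ ↿f p (1, 0) := by
    funext p
    exact dx2_eq f hf p.1 p.2
  rw [this]
  exact contDiff_pd f hf _

lemma contDiff_dy2 (f : ℝ → ℝ → ℝ) (hf : ContDiff ℝ (⊤ : ℕ∞) ↿f) :
    ContDiff ℝ (⊤ : ℕ∞) ↿(dy2 f) := by
  have : ↿(dy2 f) = fun p : ℝ × ℝ => fderiv ℝ ↿f p (0, 1) := by
    funext p
    exact dy2_eq f hf p.1 p.2
  rw [this]
  exact contDiff_pd f hf _

lemma fderiv_pd (f : ℝ → ℝ → ℝ) (hf : ContDiff ℝ (⊤ : ℕ∞) ↿f) (p : ℝ × ℝ) (w v : ℝ × ℝ) :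
    fderiv ℝ (fun q : ℝ × ℝ => fderiv ℝ ↿f q w) p v = fderiv ℝ (fderiv ℝ ↿f) p v w := by
  have hd : DifferentiableAt ℝ (fderiv ℝ ↿f) p :=
    ((hf.fderiv_right (m := (⊤ : ℕ∞)) (by simp)).differentiable (by simp)) p
  have := hd.hasFDerivAt.clm_apply (hasFDerivAt_const w p)
  rw [this.fderiv]
  simp

lemma swap2 (f : ℝ → ℝ → ℝ) (hf : ContDiff ℝ (⊤ : ℕ∞) ↿f) (x y : ℝ) :
    dy2 (dx2 f) x y = dx2 (dy2 f) x y := by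
  have hsym : ∀ v w : ℝ × ℝ,
      fderiv ℝ (fderiv ℝ ↿f) (x, y) v w = fderiv ℝ (fderiv ℝ ↿f) (x, y) w v := by
    intro v w
    apply second_derivative_symmetric (f := ↿f) (f' := fderiv ℝ ↿f)
    · intro p
      exact (hf.differentiable (by simp) p).hasFDerivAt
    · exact (((hf.fderiv_right (m := (⊤ : ℕ∞)) (by simp)).differentiable (by simp)) (x, y)).hasFDerivAt
  have e1 : dy2 (dx2 f) x y = fderiv ℝ (fderiv ℝ ↿f) (x, y) (0, 1) (1, 0) := by
    have h := dy2_eq (dx2 f) (contDiff_dx2 f hf) x y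
    rw [h]
    have : ↿(dx2 f) = fun p : ℝ × ℝ => fderiv ℝ ↿f p (1, 0) := by
      funext p; exact dx2_eq f hf p.1 p.2
    rw [this, fderiv_pd f hf]
  have e2 : dx2 (dy2 f) x y = fderiv ℝ (fderiv ℝ ↿f) (x, y) (1, 0) (0, 1) := by
    have h := dx2_eq (dy2 f) (contDiff_dy2 f hf) x y
    rw [h]
    have : ↿(dy2 f) = fun p : ℝ × ℝ => fderiv ℝ ↿f p (0, 1) := by
      funext p; exact dy2_eq f hf p.1 p.2
    rw [this, fderiv_pd f hf]
  rw [e1, e2, hsym]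

/-- `∂/∂x` at fixed `y`, with derivative `dx2`. -/
lemma hasDerivAt_dx2 (f : ℝ → ℝ → ℝ) (hf : ContDiff ℝ (⊤ : ℕ∞) ↿f) (x y : ℝ) :
    HasDerivAt (fun s => f s y) (dx2 f x y) x := by
  rw [dx2_eq f hf]; exact hasDerivAt_x f hf x y

lemma hasDerivAt_dy2 (f : ℝ → ℝ → ℝ) (hf : ContDiff ℝ (⊤ : ℕ∞) ↿f) (x y : ℝ) :
    HasDerivAt (fun t => f x t) (dy2 f x y) y := by
  rw [dy2_eq f hf]; exact hasDerivAt_y f hf x y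

/-- If `u, v` are smooth nonvanishing solutions of the reduced system
`u_y = -uv`, `v_x = uv`, then `I = u_x/u - u` is a `y`-integral and `J = v_y/v + v` is an
`x`-integral: `∂_y (u_x/u - u) = 0` and `∂_x (v_y/v + v) = 0` everywhere. -/
theorem stmt4
    (u v : ℝ → ℝ → ℝ)
    (hu : ContDiff ℝ (⊤ : ℕ∞) ↿u) (hv : ContDiff ℝ (⊤ : ℕ∞) ↿v)
    (hune : ∀ x y, u x y ≠ 0) (hvne : ∀ x y, v x y ≠ 0)
    (h1 : ∀ x y, dy2 u x y = -(u x y * v x y))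
    (h2 : ∀ x y, dx2 v x y = u x y * v x y) :
    (∀ x y, dy2 (fun x y => dx2 u x y / u x y - u x y) x y = 0) ∧
    (∀ x y, dx2 (fun x y => dy2 v x y / v x y + v x y) x y = 0) := by
  constructor
  · intro x y
    -- value of dy2 (dx2 u)
    have key : dy2 (dx2 u) x y = -(dx2 u x y * v x y + u x y * (u x y * v x y)) := by
      rw [swap2 u hu x y]
      have hx : dx2 (dy2 u) x y = deriv (fun s => -(u s y * v s y)) x := by
        unfold dx2
        congr 1
        funext s
        exact h1 s y
      rw [hx]
      have hprod : HasDerivAt (fun s => -(u s y * v s y))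
          (-(dx2 u x y * v x y + u x y * dx2 v x y)) x := by
        have := ((hasDerivAt_dx2 u hu x y).mul (hasDerivAt_dx2 v hv x y)).neg
        exact this
      rw [hprod.deriv, h2]
    have hA : HasDerivAt (fun t => u x t) (dy2 u x y) y := hasDerivAt_dy2 u hu x y
    have hB : HasDerivAt (fun t => dx2 u x t) (dy2 (dx2 u) x y) y :=
      hasDerivAt_dy2 (dx2 u) (contDiff_dx2 u hu) x y
    have hC : HasDerivAt (fun t => dx2 u x t / u x t - u x t)
        ((dy2 (dx2 u) x y * u x y - dx2 u x y * dy2 u x y) / (u x y) ^ 2 - dy2 u x y) y :=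
      (hB.div hA (hune x y)).sub hA
    show deriv (fun t => dx2 u x t / u x t - u x t) y = 0
    rw [hC.deriv, key, h1]
    field_simp [hune x y]
    ring
  · intro x y
    have key : dx2 (dy2 v) x y = -(u x y * v x y) * v x y + u x y * dy2 v x y := by
      rw [← swap2 v hv x y]
      have hx : dy2 (dx2 v) x y = deriv (fun t => u x t * v x t) y := by
        unfold dy2
        congr 1
        funext t
        exact h2 x t
      rw [hx]
      have hprod : HasDerivAt (fun t => u x t * v x t)
          (dy2 u x y * v x y + u x y * dy2 v x y) y :=
        (hasDerivAt_dy2 u hu x y).mul (hasDerivAt_dy2 v hv x y)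
      rw [hprod.deriv, h1]
    have hA : HasDerivAt (fun s => v s y) (dx2 v x y) x := hasDerivAt_dx2 v hv x y
    have hB : HasDerivAt (fun s => dy2 v s y) (dx2 (dy2 v) x y) x :=
      hasDerivAt_dx2 (dy2 v) (contDiff_dy2 v hv) x y
    have hC : HasDerivAt (fun s => dy2 v s y / v s y + v s y)
        ((dx2 (dy2 v) x y * v x y - dy2 v x y * dx2 v x y) / (v x y) ^ 2 + dx2 v x y) x :=
      (hB.div hA (hvne x y)).add hA
    show deriv (fun s => dy2 v s y / v s y + v s y) x = 0
    rw [hC.deriv, key, h2]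
    field_simp [hvne x y]
    ring
end
end
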